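/- Let K be a 3DM instance and σ(K) the associated spanUFP instance. If in a feasible solution of σ(K) exactly 8 tasks have their schedule contained in a single block I, then these 8 tasks are exactly t_L(x_i), t_R(x_i), t_L(y_j), t_R(y_j), t_L(z_k), t_R(z_k), t_L(h_ℓ), t_R(h_ℓ) for some hyperedge h_ℓ = (x_i, y_j, z_k) ∈ E. -/

import Mathlib

/-- `ρ = max {29, 3q}`. -/
def rho (q : ℕ) : ℕ := max 29 (3 * q)

/-- The number `x'_i = iρ + 1` associated to the node `x_i`. -/
def xnum (q i : ℕ) : ℤ := (i : ℤ) * (rho q : ℤ) + 1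

/-- The number `y'_j = jρ² + 2` associated to the node `y_j`. -/
def ynum (q j : ℕ) : ℤ := (j : ℤ) * (rho q : ℤ) ^ 2 + 2

/-- The number `z'_k = kρ³ + 4` associated to the node `z_k`. -/
def znum (q k : ℕ) : ℤ := (k : ℤ) * (rho q : ℤ) ^ 3 + 4

/-- The number `h'_ℓ = -iρ - jρ² - kρ³ - 7` associated to the hyperedge `h_ℓ = (x_i, y_j, z_k)`. -/
def hnum (q : ℕ) (h : ℕ × ℕ × ℕ) : ℤ :=
  -((h.1 : ℤ) * (rho q : ℤ)) - (h.2.1 : ℤ) * (rho q : ℤ) ^ 2 - (h.2.2 : ℤ) * (rho q : ℤ) ^ 3 - 7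

/-- The set `Q(K)` of the `3q + m` integers associated to a 3DM instance `K = (q, E)`. -/
def QK (q : ℕ) (E : Finset (ℕ × ℕ × ℕ)) : Finset ℤ :=
  ((Finset.Icc 1 q).image (xnum q)) ∪ ((Finset.Icc 1 q).image (ynum q)) ∪
    ((Finset.Icc 1 q).image (znum q)) ∪ (E.image (hnum q))

/-- `(q, E)` is a 3DM instance: every hyperedge is a triple of node indices in `{1, …, q}`
(`X`, `Y` and `Z` are identified with `{1, …, q}`). -/
def ValidE (q : ℕ) (E : Finset (ℕ × ℕ × ℕ)) : Prop :=
  ∀ h ∈ E, h.1 ∈ Finset.Icc 1 q ∧ h.2.1 ∈ Finset.Icc 1 q ∧ h.2.2 ∈ Finset.Icc 1 q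

/-- A hypermatching: no two distinct hyperedges share a node. -/
def Matching (M : Finset (ℕ × ℕ × ℕ)) : Prop :=
  ∀ h ∈ M, ∀ h' ∈ M, h ≠ h' → h.1 ≠ h'.1 ∧ h.2.1 ≠ h'.2.1 ∧ h.2.2 ≠ h'.2.2

/-- `μ = 1 + max_{u' ∈ Q(K)} 10|u'|`. -/
def mu (q : ℕ) (E : Finset (ℕ × ℕ × ℕ)) : ℕ :=
  1 + (QK q E).sup (fun u => 10 * u.natAbs)

/-- `A = 5μ + 4`. -/
def Aval (q : ℕ) (E : Finset (ℕ × ℕ × ℕ)) : ℕ := 5 * mu q E + 4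

/-- The path of `σ(K)` has `(2A+1)q - 1` edges; edges are identified with the
integers `0, 1, …, (2A+1)q - 2`. -/
def numEdges (q : ℕ) (E : Finset (ℕ × ℕ × ℕ)) : ℤ := (2 * (Aval q E : ℤ) + 1) * q - 1

/-- The capacity profile of `σ(K)`: within each block of `2A` consecutive edges, the
leftmost `A` edges have capacity `4A + 4` and the rightmost `A` edges have capacity `4A`;
blocks are separated by single edges of capacity `0`. -/
def cap (q : ℕ) (E : Finset (ℕ × ℕ × ℕ)) (e : ℤ) : ℤ :=
  let A : ℤ := (Aval q E : ℤ)
  let r := e % (2 * A + 1)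
  if r < A then 4 * A + 4 else if r < 2 * A then 4 * A else 0

/-- An element `u ∈ X ∪ Y ∪ Z ∪ E` of the 3DM instance. -/
inductive Elem where
  | X : ℕ → Elem
  | Y : ℕ → Elem
  | Z : ℕ → Elem
  | H : ℕ × ℕ × ℕ → Elem
deriving DecidableEq

/-- The number `u' ∈ Q(K)` associated to `u ∈ X ∪ Y ∪ Z ∪ E`. -/
def elemVal (q : ℕ) : Elem → ℤ
  | .X i => xnum q i
  | .Y j => ynum q j
  | .Z k => znum q k
  | .H h => hnum q h

/-- `u` is an actual element of the instance `(q, E)`. -/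
def validElem (q : ℕ) (E : Finset (ℕ × ℕ × ℕ)) : Elem → Prop
  | .X i => i ∈ Finset.Icc 1 q
  | .Y j => j ∈ Finset.Icc 1 q
  | .Z k => k ∈ Finset.Icc 1 q
  | .H h => h ∈ E

/-- A task of `σ(K)` is a pair `(u, s)` with `u ∈ X ∪ Y ∪ Z ∪ E`; `s = true` encodes the
task `t_L(u)` and `s = false` encodes the task `t_R(u)`. All tasks have weight 1. -/
abbrev UTask := Elem × Bool

/-- The length of a task: `t_L(u)` has length `A - 10u'`, `t_R(u)` has length `A + 10u'`. -/
def taskLen (q : ℕ) (E : Finset (ℕ × ℕ × ℕ)) (t : UTask) : ℤ :=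
  if t.2 then (Aval q E : ℤ) - 10 * elemVal q t.1
  else (Aval q E : ℤ) + 10 * elemVal q t.1

/-- The demand of a task: `t_L(u)` has demand `A + 10u' + 1`, `t_R(u)` has demand `A - 10u'`. -/
def taskDem (q : ℕ) (E : Finset (ℕ × ℕ × ℕ)) (t : UTask) : ℤ :=
  if t.2 then (Aval q E : ℤ) + 10 * elemVal q t.1 + 1
  else (Aval q E : ℤ) - 10 * elemVal q t.1

/-- The schedule of task `t`: the contiguous interval of `taskLen` edges starting at
edge `start t`. -/
noncomputable def sched (q : ℕ) (E : Finset (ℕ × ℕ × ℕ)) (start : UTask → ℤ) (t : UTask) : Finset ℤ :=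
  Finset.Ico (start t) (start t + taskLen q E t)

/-- `(S, start)` is a feasible solution of `σ(K)`: every selected task is a task of the
instance, is scheduled (contiguously, with exactly its length) within the path, and on every
edge `e` the total demand of the selected tasks whose schedule contains `e` is at most the
capacity of `e`. -/
def Feasible (q : ℕ) (E : Finset (ℕ × ℕ × ℕ)) (S : Finset UTask) (start : UTask → ℤ) : Prop :=
  (∀ t ∈ S, validElem q E t.1) ∧
  (∀ t ∈ S, 0 ≤ start t ∧ start t + taskLen q E t ≤ numEdges q E) ∧
  (∀ e : ℤ, 0 ≤ e → e < numEdges q E →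
    ∑ t ∈ S.filter (fun t => e ∈ sched q E start t), taskDem q E t ≤ cap q E e)

/-- The first edge of the `b`-th block (`b ∈ {0, …, q-1}`). -/
def blockStart (q : ℕ) (E : Finset (ℕ × ℕ × ℕ)) (b : ℕ) : ℤ :=
  (b : ℤ) * (2 * (Aval q E : ℤ) + 1)

/-- The `b`-th block of `2A` consecutive edges (`b ∈ {0, …, q-1}`). -/
noncomputable def block (q : ℕ) (E : Finset (ℕ × ℕ × ℕ)) (b : ℕ) : Finset ℤ :=
  Finset.Ico (blockStart q E b) (blockStart q E b + 2 * (Aval q E : ℤ))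

/-- The eight tasks `t_L(x_i), t_R(x_i), t_L(y_j), t_R(y_j), t_L(z_k), t_R(z_k),
t_L(h_ℓ), t_R(h_ℓ)` associated to a hyperedge `h_ℓ = (x_i, y_j, z_k)`. -/
def edgeTasks (h : ℕ × ℕ × ℕ) : Finset UTask :=
  {(Elem.X h.1, true), (Elem.X h.1, false), (Elem.Y h.2.1, true), (Elem.Y h.2.1, false),
   (Elem.Z h.2.2, true), (Elem.Z h.2.2, false), (Elem.H h, true), (Elem.H h, false)}

/-!
Every task has length in `(A - μ, A + μ)` and demand in `(A - μ, A + μ]`, so at most four tasks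
share an edge, the eight tasks of the block have total length at most `8A`, and they split into
the four passing through the edge `A - μ` of the block (capacity `4A + 4`) and the four passing
through the edge `A + μ - 1` (capacity `4A`). Writing lengths as `A - 10v` and demands as
`A + 10v (+ 1 for t_L)`, where `v = ±u'`, these three budgets leave no slack: the right four are
`t_R`-tasks whose numbers `u'` sum to `0`, and every edge of the block carries exactly four tasks.

Modulo `ρ` the numbers `x'`, `y'`, `z'`, `h'` are `1`, `2`, `4`, `-7`, and the only way to reach
`0` with four of these is `1 + 2 + 4 - 7`; reading the remaining digits in base `ρ` then shows that
the four elements are `x_i, y_j, z_k` and `h = (x_i, y_j, z_k) ∈ E`.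

Exact coverage forces the left four tasks to start at the first edge of the block and the right
four to end at its last edge, so a right task `t_R(u)` of length `A + 10u'` must be complemented by
a left task of length `A - 10u'`; the length determines the task, which is therefore `t_L(u)`.
-/

open Finset

lemma eq_zero_and_eq_zero_of_add_mul_eq_zero {d e ρ : ℤ} (hd : |d| < ρ) (h : d + e * ρ = 0) :
    d = 0 ∧ e = 0 := by
  have hd0 : d = 0 := Int.eq_zero_of_abs_lt_dvd ⟨-e, by linarith⟩ hd
  subst hd0
  exact ⟨rfl, (mul_eq_zero.mp (by simpa using h)).resolve_right (by positivity)⟩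

lemma sum_const_Ico_add (s c n : ℤ) (hn : 0 ≤ n) : ∑ _x ∈ Ico s (s + n), c = n * c := by
  rw [sum_const, Int.card_Ico, add_sub_cancel_left, nsmul_eq_mul, Int.toNat_of_nonneg hn]

lemma eq_image_fst_product_of_forall_snd_eq {α β : Type*} [DecidableEq α] {W : Finset (α × β)}
    {b : β} (h : ∀ t ∈ W, t.2 = b) : W = W.image Prod.fst ×ˢ {b} := by
  ext ⟨a, c⟩
  simp only [mem_product, mem_image, mem_singleton]
  refine ⟨fun hac => ⟨⟨_, hac, rfl⟩, h _ hac⟩, ?_⟩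
  rintro ⟨⟨t, ht, rfl⟩, rfl⟩
  rwa [← h t ht]

/-- `#{t ∈ X | x < f t}` counts the intervals `[0, f t)` through `x` and `#{t ∈ Y | N - x ≤ g t}`
the intervals `[N - g t, N)`; compare the coverage of the points `N - g t' - 1` and `N - g t'`. -/
lemma exists_eq_sub_of_card_filter_add_card_filter_eq {ι : Type*} {X Y : Finset ι}
    {f g : ι → ℤ} {N : ℤ} {c : ℕ}
    (hcov : ∀ x, 0 ≤ x → x < N → #{t ∈ X | x < f t} + #{t ∈ Y | N - x ≤ g t} = c)
    {t' : ι} (ht' : t' ∈ Y) (h1 : 1 ≤ g t') (h2 : g t' < N) : ∃ t ∈ X, f t = N - g t' := by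
  have hsub : {t ∈ Y | g t' + 1 ≤ g t} ⊆ {t ∈ Y | g t' ≤ g t} :=
    fun t ht => by simp only [mem_filter] at ht ⊢; exact ⟨ht.1, by omega⟩
  have hlt := card_lt_card ((ssubset_iff_of_subset hsub).mpr ⟨t', by simp [ht'], by simp⟩)
  have hx1 := hcov (N - g t' - 1) (by omega) (by omega)
  have hx2 := hcov (N - g t') (by omega) (by omega)
  simp only [sub_sub_cancel, show N - (N - g t' - 1) = g t' + 1 by ring] at hx1 hx2
  obtain ⟨t, ht, hnt⟩ := exists_mem_notMem_of_card_lt_card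
    (s := {t ∈ X | N - g t' < f t}) (t := {t ∈ X | N - g t' - 1 < f t}) (by omega)
  simp only [mem_filter, not_and, not_lt] at ht hnt
  exact ⟨t, ht.1, by linarith [hnt ht.1]⟩

lemma twentynine_le_rho (q : ℕ) : (29 : ℤ) ≤ rho q := by unfold rho; omega

lemma lt_rho (q : ℕ) : (q : ℤ) < rho q := by unfold rho; omega

lemma rho_ne_zero (q : ℕ) : rho q ≠ 0 := by unfold rho; omega

lemma eq_zero_of_rho_dvd {q : ℕ} {n : ℤ} (hd : (rho q : ℤ) ∣ n) (hn : |n| < 29) : n = 0 :=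
  Int.eq_zero_of_abs_lt_dvd hd (hn.trans_le (twentynine_le_rho q))

lemma hnum_injOn (q : ℕ) :
    Set.InjOn (hnum q) {p | p.1 ∈ Icc 1 q ∧ p.2.1 ∈ Icc 1 q ∧ p.2.2 ∈ Icc 1 q} := by
  intro p hp p' hp' h
  simp only [Set.mem_ofPred_eq, mem_Icc] at hp hp'
  have hq := lt_rho q
  set ρ : ℤ := (rho q : ℤ)
  have hdigits : ((p.1 : ℤ) - p'.1) + (((p.2.1 : ℤ) - p'.2.1) + ((p.2.2 : ℤ) - p'.2.2) * ρ) * ρ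
      = 0 := by
    have : ρ * (((p.1 : ℤ) - p'.1) + (((p.2.1 : ℤ) - p'.2.1) + ((p.2.2 : ℤ) - p'.2.2) * ρ) * ρ)
        = 0 := by
      simp only [hnum] at h; linear_combination -h
    simpa [ρ, rho_ne_zero] using this
  obtain ⟨h1, h23⟩ := eq_zero_and_eq_zero_of_add_mul_eq_zero (by rw [abs_lt]; omega) hdigits
  obtain ⟨h2, h3⟩ := eq_zero_and_eq_zero_of_add_mul_eq_zero (by rw [abs_lt]; omega) h23
  ext <;> omega

def elemOffset : Elem → ℤ
  | .X _ => 1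
  | .Y _ => 2
  | .Z _ => 4
  | .H _ => -7

lemma abs_elemOffset_le (u : Elem) : |elemOffset u| ≤ 7 := by
  cases u <;> simp [elemOffset]

lemma rho_dvd_elemVal_sub_elemOffset (q : ℕ) (u : Elem) :
    (rho q : ℤ) ∣ elemVal q u - elemOffset u := by
  cases u with
  | X i => exact ⟨i, by simp [elemVal, xnum, elemOffset]; ring⟩
  | Y j => exact ⟨j * rho q, by simp [elemVal, ynum, elemOffset]; ring⟩
  | Z k => exact ⟨k * rho q ^ 2, by simp [elemVal, znum, elemOffset]; ring⟩
  | H p => exact ⟨-p.1 - p.2.1 * rho q - p.2.2 * rho q ^ 2, by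
      simp [elemVal, hnum, elemOffset]; ring⟩

lemma elemVal_add_elemVal_ne_zero (q : ℕ) (u v : Elem) : elemVal q u + elemVal q v ≠ 0 := by
  intro h
  have hd : (rho q : ℤ) ∣ elemOffset u + elemOffset v := by
    have := dvd_add (rho_dvd_elemVal_sub_elemOffset q u) (rho_dvd_elemVal_sub_elemOffset q v)
    rwa [show elemVal q u - elemOffset u + (elemVal q v - elemOffset v)
      = -(elemOffset u + elemOffset v) by linarith, dvd_neg] at this
  have := eq_zero_of_rho_dvd hd <| by
    linarith [abs_add_le (elemOffset u) (elemOffset v), abs_elemOffset_le u, abs_elemOffset_le v]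
  cases u <;> cases v <;> simp [elemOffset] at this

lemma elemVal_injOn {q : ℕ} {E : Finset (ℕ × ℕ × ℕ)} (hE : ValidE q E) :
    Set.InjOn (elemVal q) {u | validElem q E u} := by
  intro u hu v hv h
  have hd : (rho q : ℤ) ∣ elemOffset u - elemOffset v := by
    have := dvd_sub (rho_dvd_elemVal_sub_elemOffset q u) (rho_dvd_elemVal_sub_elemOffset q v)
    rwa [show elemVal q u - elemOffset u - (elemVal q v - elemOffset v)
      = -(elemOffset u - elemOffset v) by linarith, dvd_neg] at this
  have hoff := eq_zero_of_rho_dvd hd <| by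
    linarith [abs_sub (elemOffset u) (elemOffset v), abs_elemOffset_le u, abs_elemOffset_le v]
  rcases u with i | j | k | p <;> rcases v with i' | j' | k' | p' <;>
    simp only [elemOffset] at hoff <;> norm_num at hoff
  case H.H => exact congrArg Elem.H (hnum_injOn q (hE p hu) (hE p' hv) h)
  all_goals simpa [elemVal, xnum, ynum, znum, rho_ne_zero] using h

def hyperedgeElems (h : ℕ × ℕ × ℕ) : Finset Elem := {.X h.1, .Y h.2.1, .Z h.2.2, .H h}

lemma edgeTasks_eq (h : ℕ × ℕ × ℕ) :
    edgeTasks h = hyperedgeElems h ×ˢ {true} ∪ hyperedgeElems h ×ˢ {false} := by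
  ext ⟨u, c⟩
  cases c <;> simp [edgeTasks, hyperedgeElems]

lemma sum_elemOffset_eq_zero {q : ℕ} {U : Finset Elem} (hU : #U ≤ 4)
    (hsum : ∑ u ∈ U, elemVal q u = 0) : ∑ u ∈ U, elemOffset u = 0 := by
  have hd : (rho q : ℤ) ∣ ∑ u ∈ U, elemOffset u := by
    have := dvd_sum fun u (_ : u ∈ U) => rho_dvd_elemVal_sub_elemOffset q u
    rwa [sum_sub_distrib, hsum, zero_sub, dvd_neg] at this
  refine eq_zero_of_rho_dvd hd ?_
  calc |∑ u ∈ U, elemOffset u| ≤ ∑ u ∈ U, |elemOffset u| := abs_sum_le_sum_abs _ _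
    _ ≤ #U • 7 := sum_le_card_nsmul _ _ _ fun u _ => abs_elemOffset_le u
    _ < 29 := by rw [nsmul_eq_mul]; norm_cast; omega

lemma exists_mem_elemOffset_eq {U : Finset Elem} (hU : #U = 4)
    (hsum : ∑ u ∈ U, elemOffset u = 0) :
    ∀ c ∈ ({1, 2, 4, -7} : Finset ℤ), ∃ u ∈ U, elemOffset u = c := by
  have hmaps : ∀ u ∈ U, elemOffset u ∈ ({1, 2, 4, -7} : Finset ℤ) := by
    intro u _; cases u <;> simp [elemOffset]
  have hcard := card_eq_sum_card_fiberwise hmaps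
  have hsum' := sum_fiberwise_of_maps_to' hmaps (fun c => c)
  rw [hsum] at hsum'
  simp only [sum_const, nsmul_eq_mul] at hsum'
  rw [sum_insert (by decide), sum_insert (by decide), sum_insert (by decide), sum_singleton]
    at hcard hsum'
  intro c hc
  refine filter_nonempty_iff.mp (card_pos.mp ?_)
  simp only [mem_insert, mem_singleton] at hc
  rcases hc with rfl | rfl | rfl | rfl <;> omega

lemma exists_eq_hyperedgeElems {q : ℕ} {E : Finset (ℕ × ℕ × ℕ)} (hE : ValidE q E)
    {U : Finset Elem} (hU : #U = 4) (hval : ∀ u ∈ U, validElem q E u)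
    (hsum : ∑ u ∈ U, elemVal q u = 0) : ∃ h ∈ E, U = hyperedgeElems h := by
  have hex := exists_mem_elemOffset_eq hU (sum_elemOffset_eq_zero hU.le hsum)
  obtain ⟨x, hx, hxo⟩ := hex 1 (by simp)
  obtain ⟨y, hy, hyo⟩ := hex 2 (by simp)
  obtain ⟨z, hz, hzo⟩ := hex 4 (by simp)
  obtain ⟨w, hw, hwo⟩ := hex (-7) (by simp)
  obtain ⟨i, rfl⟩ : ∃ i, x = .X i := by cases x <;> simp [elemOffset] at hxo ⊢
  obtain ⟨j, rfl⟩ : ∃ j, y = .Y j := by cases y <;> simp [elemOffset] at hyo ⊢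
  obtain ⟨k, rfl⟩ : ∃ k, z = .Z k := by cases z <;> simp [elemOffset] at hzo ⊢
  obtain ⟨p, rfl⟩ : ∃ p, w = .H p := by cases w <;> simp [elemOffset] at hwo ⊢
  have hUeq : U = {.X i, .Y j, .Z k, .H p} :=
    (eq_of_subset_of_card_le (by simp [insert_subset_iff, hx, hy, hz, hw]) (by simp [hU])).symm
  have hpE : p ∈ E := hval _ hw
  have hhnum : hnum q p = hnum q (i, j, k) := by
    rw [hUeq, sum_insert (by simp), sum_insert (by simp), sum_insert (by simp), sum_singleton]
      at hsum
    simp only [elemVal, xnum, ynum, znum, hnum] at hsum ⊢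
    linear_combination hsum
  obtain rfl := hnum_injOn q (hE p hpE) (show (i, j, k).1 ∈ Icc 1 q ∧ _ from
    ⟨hval _ hx, hval _ hy, hval _ hz⟩) hhnum
  exact ⟨_, hpE, hUeq⟩

def signedVal (q : ℕ) (t : UTask) : ℤ := if t.2 then elemVal q t.1 else -elemVal q t.1

section Tasks

variable {q : ℕ} {E : Finset (ℕ × ℕ × ℕ)}

lemma Aval_eq : (Aval q E : ℤ) = 5 * mu q E + 4 := by
  simp [Aval]

lemma one_le_mu : 1 ≤ mu q E := Nat.le_add_right 1 _

lemma taskLen_eq (t : UTask) : taskLen q E t = Aval q E - 10 * signedVal q t := by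
  unfold taskLen signedVal; split <;> ring

lemma taskDem_eq (t : UTask) :
    taskDem q E t = Aval q E + 10 * signedVal q t + if t.2 then 1 else 0 := by
  unfold taskDem signedVal; split <;> ring

lemma elemVal_mem_QK {u : Elem} (hu : validElem q E u) : elemVal q u ∈ QK q E := by
  simp only [QK, mem_union, mem_image]
  cases u with
  | X i => exact Or.inl (Or.inl (Or.inl ⟨i, hu, rfl⟩))
  | Y j => exact Or.inl (Or.inl (Or.inr ⟨j, hu, rfl⟩))
  | Z k => exact Or.inl (Or.inr ⟨k, hu, rfl⟩)
  | H p => exact Or.inr ⟨p, hu, rfl⟩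

lemma abs_ten_mul_signedVal_lt {t : UTask} (ht : validElem q E t.1) :
    |10 * signedVal q t| < mu q E := by
  have hlt : 10 * (elemVal q t.1).natAbs < mu q E :=
    Nat.lt_one_add_iff.mpr (le_sup (f := fun u => 10 * u.natAbs) (elemVal_mem_QK ht))
  have habs : |signedVal q t| = |elemVal q t.1| := by
    unfold signedVal; split <;> simp
  rw [abs_mul, habs, abs_of_pos (by norm_num : (0 : ℤ) < 10), Int.abs_eq_natAbs]
  exact_mod_cast hlt

lemma taskLen_bounds {t : UTask} (ht : validElem q E t.1) :
    (Aval q E : ℤ) - mu q E < taskLen q E t ∧ taskLen q E t < Aval q E + mu q E := by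
  have := abs_lt.mp (abs_ten_mul_signedVal_lt ht)
  rw [taskLen_eq]
  constructor <;> linarith

lemma sub_mu_lt_taskDem {t : UTask} (ht : validElem q E t.1) :
    (Aval q E : ℤ) - mu q E < taskDem q E t := by
  have := abs_lt.mp (abs_ten_mul_signedVal_lt ht)
  rw [taskDem_eq]
  split <;> linarith

lemma taskLen_injOn (hE : ValidE q E) : Set.InjOn (taskLen q E) {t | validElem q E t.1} := by
  rintro ⟨u, a⟩ hu ⟨v, c⟩ hv h
  have hval : signedVal q (u, a) = signedVal q (v, c) := by
    simp only [taskLen_eq] at h; linarith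
  cases a <;> cases c <;> simp only [signedVal, Bool.false_eq_true, if_true, if_false] at hval
  · simpa using elemVal_injOn hE hu hv (neg_inj.mp hval)
  · exact (elemVal_add_elemVal_ne_zero q u v (by linarith)).elim
  · exact (elemVal_add_elemVal_ne_zero q u v (by linarith)).elim
  · simpa using elemVal_injOn hE hu hv hval

lemma sum_taskLen_eq_card_mul_sub (W : Finset UTask) :
    ∑ t ∈ W, taskLen q E t = #W * (Aval q E : ℤ) - 10 * ∑ t ∈ W, signedVal q t := by
  simp only [taskLen_eq, sum_sub_distrib, sum_const, nsmul_eq_mul, mul_sum]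

lemma sum_taskDem_eq_card_mul_add (W : Finset UTask) :
    ∑ t ∈ W, taskDem q E t
      = #W * (Aval q E : ℤ) + 10 * ∑ t ∈ W, signedVal q t + #{t ∈ W | t.2} := by
  simp only [taskDem_eq, sum_add_distrib, sum_const, nsmul_eq_mul, mul_sum, sum_boole]

lemma sum_signedVal_eq_zero_of_sum_taskDem_le {X Y : Finset UTask} (hX : #X = 4) (hY : #Y = 4)
    (hXd : ∑ t ∈ X, taskDem q E t ≤ 4 * Aval q E + 4)
    (hYd : ∑ t ∈ Y, taskDem q E t ≤ 4 * Aval q E)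
    (hlen : ∑ t ∈ X, taskLen q E t + ∑ t ∈ Y, taskLen q E t ≤ 8 * Aval q E) :
    ∑ t ∈ X, signedVal q t = 0 ∧ ∑ t ∈ Y, signedVal q t = 0 ∧ ∀ t ∈ Y, t.2 = false := by
  rw [sum_taskDem_eq_card_mul_add, hX] at hXd
  rw [sum_taskDem_eq_card_mul_add, hY] at hYd
  rw [sum_taskLen_eq_card_mul_sub, sum_taskLen_eq_card_mul_sub, hX, hY] at hlen
  refine ⟨by omega, by omega, fun t ht => ?_⟩
  have hR : #{t ∈ Y | t.2} = 0 := by omega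
  simpa using filter_eq_empty_iff.mp (card_eq_zero.mp hR) ht

end Tasks

noncomputable def covering (q : ℕ) (E : Finset (ℕ × ℕ × ℕ)) (start : UTask → ℤ)
    (T : Finset UTask) (e : ℤ) : Finset UTask :=
  T.filter (fun t => e ∈ sched q E start t)

structure BlockPacking (q : ℕ) (E : Finset (ℕ × ℕ × ℕ)) (start : UTask → ℤ) (s : ℤ)
    (T : Finset UTask) : Prop where
  valid : ∀ t ∈ T, validElem q E t.1
  sched_subset : ∀ t ∈ T, sched q E start t ⊆ Ico s (s + 2 * Aval q E)
  sum_taskDem_le : ∀ e ∈ Ico s (s + 2 * Aval q E), ∑ t ∈ covering q E start T e, taskDem q E t ≤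
    if e < s + Aval q E then 4 * (Aval q E : ℤ) + 4 else 4 * (Aval q E : ℤ)

/-- Every task of a block packing has length in `(A - μ, A + μ)`, so it passes through the left
probe edge `s + A - μ` if it starts there or earlier, and through the right probe edge
`s + A + μ - 1` otherwise. -/
noncomputable def leftTasks (q : ℕ) (E : Finset (ℕ × ℕ × ℕ)) (start : UTask → ℤ) (s : ℤ)
    (T : Finset UTask) : Finset UTask :=
  covering q E start T (s + Aval q E - mu q E)

noncomputable def rightTasks (q : ℕ) (E : Finset (ℕ × ℕ × ℕ)) (start : UTask → ℤ) (s : ℤ)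
    (T : Finset UTask) : Finset UTask :=
  covering q E start T (s + Aval q E + mu q E - 1)

lemma leftTasks_subset {q : ℕ} {E : Finset (ℕ × ℕ × ℕ)} {start : UTask → ℤ} {s : ℤ}
    {T : Finset UTask} : leftTasks q E start s T ⊆ T :=
  filter_subset _ _

lemma rightTasks_subset {q : ℕ} {E : Finset (ℕ × ℕ × ℕ)} {start : UTask → ℤ} {s : ℤ}
    {T : Finset UTask} : rightTasks q E start s T ⊆ T :=
  filter_subset _ _

namespace BlockPacking

variable {q : ℕ} {E : Finset (ℕ × ℕ × ℕ)} {start : UTask → ℤ} {s : ℤ} {T : Finset UTask}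

lemma start_bounds (hP : BlockPacking q E start s T) {t : UTask} (ht : t ∈ T) :
    s ≤ start t ∧ start t + taskLen q E t ≤ s + 2 * Aval q E := by
  have hlen := taskLen_bounds (hP.valid t ht)
  have hA := @Aval_eq q E
  exact (Ico_subset_Ico_iff (by omega)).mp (hP.sched_subset t ht)

lemma card_covering_le (hP : BlockPacking q E start s T) {e : ℤ}
    (he : e ∈ Ico s (s + 2 * Aval q E)) : #(covering q E start T e) ≤ 4 := by
  by_contra! h
  have hlow := card_nsmul_le_sum (covering q E start T e) (taskDem q E) (Aval q E - mu q E + 1)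
    fun t ht => sub_mu_lt_taskDem (hP.valid t (mem_filter.mp ht).1)
  have hup := hP.sum_taskDem_le e he
  have hA := @Aval_eq q E
  have h5 : (5 : ℤ) ≤ #(covering q E start T e) := by exact_mod_cast h
  rw [nsmul_eq_mul] at hlow
  split_ifs at hup <;> nlinarith

lemma sum_card_covering (hP : BlockPacking q E start s T) :
    ∑ e ∈ Ico s (s + 2 * Aval q E), (#(covering q E start T e) : ℤ)
      = ∑ t ∈ T, taskLen q E t := by
  have key : ∑ e ∈ Ico s (s + 2 * Aval q E), #(covering q E start T e)
      = ∑ t ∈ T, #{e ∈ Ico s (s + 2 * Aval q E) | e ∈ sched q E start t} :=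
    sum_card_bipartiteAbove_eq_sum_card_bipartiteBelow _
  rw [← Nat.cast_sum, key, Nat.cast_sum]
  refine sum_congr rfl fun t ht => ?_
  rw [filter_mem_eq_inter, inter_eq_right.mpr (hP.sched_subset t ht), sched,
    Int.card_Ico, add_sub_cancel_left, Int.toNat_of_nonneg]
  have := taskLen_bounds (hP.valid t ht)
  have hA := @Aval_eq q E
  omega

lemma sum_taskLen_le (hP : BlockPacking q E start s T) :
    ∑ t ∈ T, taskLen q E t ≤ 8 * Aval q E := by
  rw [← hP.sum_card_covering]
  calc ∑ e ∈ Ico s (s + 2 * Aval q E), (#(covering q E start T e) : ℤ)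
      ≤ ∑ _e ∈ Ico s (s + 2 * Aval q E), (4 : ℤ) :=
        sum_le_sum fun e he => by exact_mod_cast hP.card_covering_le he
    _ = 8 * Aval q E := by rw [sum_const_Ico_add _ _ _ (by positivity)]; ring

lemma leftTasks_union_rightTasks (hP : BlockPacking q E start s T) :
    leftTasks q E start s T ∪ rightTasks q E start s T = T := by
  refine (union_subset leftTasks_subset rightTasks_subset).antisymm fun t ht => ?_
  have hlen := taskLen_bounds (hP.valid t ht)
  have hb := hP.start_bounds ht
  have hA := @Aval_eq q E
  simp only [leftTasks, rightTasks, covering, sched, mem_union, mem_filter, mem_Ico, ht, true_and]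
  omega

lemma card_leftTasks_rightTasks (hP : BlockPacking q E start s T) (h8 : #T = 8) :
    #(leftTasks q E start s T) = 4 ∧ #(rightTasks q E start s T) = 4 ∧
      Disjoint (leftTasks q E start s T) (rightTasks q E start s T) := by
  have hA := @Aval_eq q E
  have hμ := @one_le_mu q E
  have hX : #(leftTasks q E start s T) ≤ 4 :=
    hP.card_covering_le (by simp only [mem_Ico]; omega)
  have hY : #(rightTasks q E start s T) ≤ 4 :=
    hP.card_covering_le (by simp only [mem_Ico]; omega)
  have hunion := card_union_add_card_inter (leftTasks q E start s T) (rightTasks q E start s T)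
  rw [hP.leftTasks_union_rightTasks, h8] at hunion
  refine ⟨by omega, by omega, ?_⟩
  rw [disjoint_iff_inter_eq_empty, ← card_eq_zero]
  omega

lemma sum_taskLen_eq_add (hP : BlockPacking q E start s T) (h8 : #T = 8) :
    ∑ t ∈ T, taskLen q E t = ∑ t ∈ leftTasks q E start s T, taskLen q E t +
      ∑ t ∈ rightTasks q E start s T, taskLen q E t := by
  rw [← sum_union (hP.card_leftTasks_rightTasks h8).2.2, hP.leftTasks_union_rightTasks]

lemma sum_signedVal_eq_zero (hP : BlockPacking q E start s T) (h8 : #T = 8) :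
    ∑ t ∈ leftTasks q E start s T, signedVal q t = 0 ∧
      ∑ t ∈ rightTasks q E start s T, signedVal q t = 0 ∧
      ∀ t ∈ rightTasks q E start s T, t.2 = false := by
  obtain ⟨hX, hY, -⟩ := hP.card_leftTasks_rightTasks h8
  have hA := @Aval_eq q E
  have hμ := @one_le_mu q E
  have hXd := hP.sum_taskDem_le (s + Aval q E - mu q E) (by simp only [mem_Ico]; omega)
  have hYd := hP.sum_taskDem_le (s + Aval q E + mu q E - 1) (by simp only [mem_Ico]; omega)
  rw [if_pos (by omega)] at hXd
  rw [if_neg (by omega)] at hYd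
  exact sum_signedVal_eq_zero_of_sum_taskDem_le hX hY hXd hYd
    (hP.sum_taskLen_eq_add h8 ▸ hP.sum_taskLen_le)

lemma sum_taskLen_eq_eight_mul (hP : BlockPacking q E start s T) (h8 : #T = 8) :
    ∑ t ∈ T, taskLen q E t = 8 * Aval q E := by
  obtain ⟨hX, hY, -⟩ := hP.card_leftTasks_rightTasks h8
  obtain ⟨hXs, hYs, -⟩ := hP.sum_signedVal_eq_zero h8
  rw [hP.sum_taskLen_eq_add h8, sum_taskLen_eq_card_mul_sub, sum_taskLen_eq_card_mul_sub, hX, hY,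
    hXs, hYs]
  ring

lemma card_covering_eq_four (hP : BlockPacking q E start s T) (h8 : #T = 8) {e : ℤ}
    (he : e ∈ Ico s (s + 2 * Aval q E)) : #(covering q E start T e) = 4 := by
  have hsum : ∑ e ∈ Ico s (s + 2 * Aval q E), (#(covering q E start T e) : ℤ)
      = ∑ _e ∈ Ico s (s + 2 * Aval q E), (4 : ℤ) := by
    rw [hP.sum_card_covering, hP.sum_taskLen_eq_eight_mul h8,
      sum_const_Ico_add _ _ _ (by positivity)]
    ring
  have hle : ∀ e ∈ Ico s (s + 2 * Aval q E), (#(covering q E start T e) : ℤ) ≤ 4 :=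
    fun e he => by exact_mod_cast hP.card_covering_le he
  exact_mod_cast (sum_eq_sum_iff_of_le hle).mp hsum e he

lemma start_eq_of_mem_leftTasks (hP : BlockPacking q E start s T) (h8 : #T = 8)
    {t : UTask} (ht : t ∈ leftTasks q E start s T) : start t = s := by
  have hA := @Aval_eq q E
  have hsub : covering q E start T s ⊆ leftTasks q E start s T := by
    intro t ht
    obtain ⟨htT, hts⟩ := mem_filter.mp ht
    have hlen := taskLen_bounds (hP.valid t htT)
    have := hP.start_bounds htT
    simp only [sched, mem_Ico] at hts
    exact mem_filter.mpr ⟨htT, by simp only [sched, mem_Ico]; omega⟩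
  have hcard := hP.card_covering_eq_four h8 (e := s) (by simp only [mem_Ico]; omega)
  rw [← eq_of_subset_of_card_le hsub (by rw [hcard, (hP.card_leftTasks_rightTasks h8).1])] at ht
  obtain ⟨htT, hts⟩ := mem_filter.mp ht
  have := hP.start_bounds htT
  simp only [sched, mem_Ico] at hts
  omega

lemma end_eq_of_mem_rightTasks (hP : BlockPacking q E start s T) (h8 : #T = 8)
    {t : UTask} (ht : t ∈ rightTasks q E start s T) :
    start t + taskLen q E t = s + 2 * Aval q E := by
  have hA := @Aval_eq q E
  have hsub : covering q E start T (s + 2 * Aval q E - 1) ⊆ rightTasks q E start s T := by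
    intro t ht
    obtain ⟨htT, hts⟩ := mem_filter.mp ht
    have hlen := taskLen_bounds (hP.valid t htT)
    have := hP.start_bounds htT
    simp only [sched, mem_Ico] at hts
    exact mem_filter.mpr ⟨htT, by simp only [sched, mem_Ico]; omega⟩
  have hcard := hP.card_covering_eq_four h8 (e := s + 2 * Aval q E - 1)
    (by simp only [mem_Ico]; omega)
  rw [← eq_of_subset_of_card_le hsub
    (by rw [hcard, (hP.card_leftTasks_rightTasks h8).2.1])] at ht
  obtain ⟨htT, hts⟩ := mem_filter.mp ht
  have := hP.start_bounds htT
  simp only [sched, mem_Ico] at hts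
  omega

lemma card_filter_add_card_filter (hP : BlockPacking q E start s T) (h8 : #T = 8) {x : ℤ}
    (hx0 : 0 ≤ x) (hx : x < 2 * Aval q E) :
    #{t ∈ leftTasks q E start s T | x < taskLen q E t} +
      #{t ∈ rightTasks q E start s T | 2 * Aval q E - x ≤ taskLen q E t} = 4 := by
  have h4 := hP.card_covering_eq_four h8 (e := s + x) (by simp only [mem_Ico]; omega)
  rw [covering, ← hP.leftTasks_union_rightTasks, filter_union,
    card_union_of_disjoint (disjoint_filter_filter (hP.card_leftTasks_rightTasks h8).2.2)] at h4
  rw [← h4]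
  congr 1
  · refine congrArg card (filter_congr fun t ht => ?_)
    have := hP.start_eq_of_mem_leftTasks h8 ht
    simp only [sched, mem_Ico]
    omega
  · refine congrArg card (filter_congr fun t ht => ?_)
    have := hP.end_eq_of_mem_rightTasks h8 ht
    simp only [sched, mem_Ico]
    omega

lemma mem_leftTasks_of_mem_rightTasks (hE : ValidE q E) (hP : BlockPacking q E start s T)
    (h8 : #T = 8) {u : Elem} (hu : (u, false) ∈ rightTasks q E start s T) :
    (u, true) ∈ leftTasks q E start s T := by
  have hvalid : validElem q E u := hP.valid _ (rightTasks_subset hu)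
  have hlen := taskLen_bounds (E := E) (t := (u, false)) hvalid
  have hA := @Aval_eq q E
  obtain ⟨t, ht, hteq⟩ := exists_eq_sub_of_card_filter_add_card_filter_eq
    (fun x hx0 hx => hP.card_filter_add_card_filter h8 hx0 hx) hu (by omega) (by omega)
  have hcomp : taskLen q E t = taskLen q E (u, true) := by
    rw [hteq, taskLen_eq, taskLen_eq]
    simp only [signedVal, if_true, Bool.false_eq_true, if_false]
    ring
  rwa [taskLen_injOn hE (hP.valid t (leftTasks_subset ht)) hvalid hcomp] at ht

theorem exists_eq_edgeTasks (hE : ValidE q E) (hP : BlockPacking q E start s T) (h8 : #T = 8) :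
    ∃ h ∈ E, T = edgeTasks h := by
  obtain ⟨hX, hY, -⟩ := hP.card_leftTasks_rightTasks h8
  obtain ⟨-, hYsum, hYR⟩ := hP.sum_signedVal_eq_zero h8
  set U := (rightTasks q E start s T).image Prod.fst
  have hYU : rightTasks q E start s T = U ×ˢ {false} := eq_image_fst_product_of_forall_snd_eq hYR
  have hU4 : #U = 4 := by rw [← hY, hYU, card_product, card_singleton, mul_one]
  have hmemY : ∀ u ∈ U, (u, false) ∈ rightTasks q E start s T := fun u hu => by
    rw [hYU]; exact mem_product.mpr ⟨hu, mem_singleton_self _⟩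
  have hUval : ∀ u ∈ U, validElem q E u := fun u hu =>
    hP.valid (u, false) (rightTasks_subset (hmemY u hu))
  have hUsum : ∑ u ∈ U, elemVal q u = 0 := by
    rw [hYU, sum_product, sum_congr rfl fun u _ => sum_singleton _ _] at hYsum
    simpa [signedVal] using hYsum
  obtain ⟨h, hhE, hUh⟩ := exists_eq_hyperedgeElems hE hU4 hUval hUsum
  have hXU : U ×ˢ {true} = leftTasks q E start s T :=
    eq_of_subset_of_card_le
      (fun ⟨u, c⟩ ht => by
        obtain ⟨hu, rfl⟩ : u ∈ U ∧ c = true := by simpa only [mem_product, mem_singleton] using ht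
        exact hP.mem_leftTasks_of_mem_rightTasks hE h8 (hmemY _ hu))
      (by rw [hX, card_product, card_singleton, mul_one, hU4])
  refine ⟨h, hhE, ?_⟩
  rw [← hP.leftTasks_union_rightTasks, ← hXU, hYU, hUh, edgeTasks_eq]

end BlockPacking

section Reduction

variable {q : ℕ} {E : Finset (ℕ × ℕ × ℕ)} {b : ℕ} {e : ℤ}

lemma nonneg_and_lt_numEdges_of_mem_block (hb : b < q) (he : e ∈ block q E b) :
    0 ≤ e ∧ e < numEdges q E := by
  simp only [block, blockStart, mem_Ico] at he
  have : ((b : ℤ) + 1) * (2 * Aval q E + 1) ≤ q * (2 * Aval q E + 1) := by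
    gcongr; exact_mod_cast hb
  simp only [numEdges]
  constructor <;> nlinarith

lemma cap_of_mem_block (he : e ∈ block q E b) :
    cap q E e = if e < blockStart q E b + Aval q E then 4 * (Aval q E : ℤ) + 4
      else 4 * (Aval q E : ℤ) := by
  simp only [block, mem_Ico] at he
  have hmod : e % (2 * Aval q E + 1) = e - blockStart q E b := by
    conv_lhs => rw [show e = e - blockStart q E b + b * (2 * Aval q E + 1) by simp [blockStart]]
    rw [Int.add_mul_emod_self_right, Int.emod_eq_of_lt (by omega) (by omega)]
  simp only [cap, hmod]
  split_ifs <;> omega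

lemma Feasible.blockPacking {S : Finset UTask} {start : UTask → ℤ}
    (hfeas : Feasible q E S start) (hb : b < q) :
    BlockPacking q E start (blockStart q E b)
      (S.filter fun t => sched q E start t ⊆ block q E b) where
  valid t ht := hfeas.1 t (mem_filter.mp ht).1
  sched_subset t ht := (mem_filter.mp ht).2
  sum_taskDem_le e he := by
    obtain ⟨he0, heN⟩ := nonneg_and_lt_numEdges_of_mem_block hb he
    rw [← cap_of_mem_block he]
    refine le_trans (sum_le_sum_of_subset_of_nonneg
      (filter_subset_filter _ (filter_subset _ S)) fun t ht _ => ?_) (hfeas.2.2 e he0 heN)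
    have := sub_mu_lt_taskDem (hfeas.1 t (mem_filter.mp ht).1)
    have := @Aval_eq q E
    omega

end Reduction

/-- If in a feasible solution of `σ(K)` exactly 8 tasks have their schedule contained in a
single block `I`, then these 8 tasks are exactly `t_L(x_i), t_R(x_i), t_L(y_j), t_R(y_j),
t_L(z_k), t_R(z_k), t_L(h_ℓ), t_R(h_ℓ)` for some hyperedge `h_ℓ = (x_i, y_j, z_k) ∈ E`. -/
theorem eight_per_block_is_hyperedge (q : ℕ) (E : Finset (ℕ × ℕ × ℕ)) (hE : ValidE q E)
    (S : Finset UTask) (start : UTask → ℤ) (hfeas : Feasible q E S start)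
    (b : ℕ) (hb : b < q)
    (h8 : (S.filter (fun t => sched q E start t ⊆ block q E b)).card = 8) :
    ∃ h ∈ E, S.filter (fun t => sched q E start t ⊆ block q E b) = edgeTasks h :=
  (hfeas.blockPacking hb).exists_eq_edgeTasks hE h8
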